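/- arXiv:2003.08454 — 4 statements merged into one kernel-verified Lean document; each statement's English description precedes it below -/
import Mathlib

section
/- Over a finite field with q elements, exactly q^4 of the q^5 long Weierstrass equations Y^2 + a1 XY + a3 Y = X^3 + a2 X^2 + a4 X + a6 are singular, i.e. have discriminant zero. -/
section Aux

variable {F : Type*} [Field F] [Fintype F]

private lemma aux_exists_sq (h2 : (2:F) = 0) (a : F) : ∃ x : F, x ^ 2 = a := by
  have hinj : Function.Injective (fun x : F => x ^ 2) := by
    intro x y h
    simp only at h
    have h0 : (x - y) * (x + y) = 0 := by linear_combination h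
    rcases mul_eq_zero.mp h0 with h' | h'
    · exact sub_eq_zero.mp h'
    · linear_combination h' - y * h2
  exact Finite.surjective_of_injective hinj a

private lemma aux_exists_cube (h3 : (3:F) = 0) (a : F) : ∃ x : F, x ^ 3 = a := by
  have hinj : Function.Injective (fun x : F => x ^ 3) := by
    intro x y h
    simp only at h
    have h0 : (x - y) ^ 3 = 0 := by linear_combination h - (x * y * (x - y)) * h3
    exact sub_eq_zero.mp (pow_eq_zero_iff (by norm_num : (3:ℕ) ≠ 0) |>.mp h0)
  exact Finite.surjective_of_injective hinj a

/-- A monic cubic with vanishing discriminant over a finite field of characteristic ≠ 2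
has a rational double root. -/
private lemma cubic_double_root (h2 : (2:F) ≠ 0) (p q s : F)
    (hD : p^2*q^2 - 4*p^3*s - 4*q^3 - 27*s^2 + 18*p*q*s = 0) :
    ∃ r : F, r^3 + p*r^2 + q*r + s = 0 ∧ 3*r^2 + 2*p*r + q = 0 := by
  by_cases h3 : (3:F) = 0
  · -- characteristic 3
    by_cases hp : p = 0
    · have hq3 : q ^ 3 = 0 := by
        linear_combination (-1:F) * hD + (-q^3 - 9*s^2) * h3
          + (p*q^2 - 4*p^2*s + 18*q*s) * hp
      have hq : q = 0 := pow_eq_zero_iff (by norm_num : (3:ℕ) ≠ 0) |>.mp hq3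
      obtain ⟨c, hc⟩ := aux_exists_cube h3 (-s)
      refine ⟨c, ?_, ?_⟩
      · linear_combination hc + c^2 * hp + c * hq
      · linear_combination c^2 * h3 + 2*c*hp + hq
    · refine ⟨q / p, ?_, ?_⟩
      · field_simp
        linear_combination -hD + (-q^3 + p^2*q^2 - p^3*s - 9*s^2 + 6*p*q*s) * h3
      · field_simp
        linear_combination (q^2 + p^2*q) * h3
  · -- characteristic ≠ 3
    by_cases hd : p^2 - 3*q = 0
    · -- triple root
      have hs : 27*s - p^3 = 0 := by
        have hsq : (27*s - p^3)^2 = 0 := by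
          linear_combination (-27:F) * hD + (p^4 + 3*p^2*q + 36*q^2 - 162*p*s) * hd
        exact pow_eq_zero_iff (by norm_num : (2:ℕ) ≠ 0) |>.mp hsq
      refine ⟨-p / 3, ?_, ?_⟩
      · field_simp
        linear_combination 3*p*hd + hs
      · field_simp
        linear_combination (-1:F) * hd
    · -- genuine double root
      refine ⟨(9*s - p*q) / (2*(p^2 - 3*q)), ?_, ?_⟩
      · have hd' : p ^ 2 - q * 3 ≠ 0 := by rwa [mul_comm q]
        field_simp
        linear_combination (-27*s + 9*p*q - 2*p^3) * hD
      · field_simp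
        linear_combination (-9:F) * hD

/-- A Weierstrass equation with zero discriminant over a finite field has a rational
singular point. -/
private lemma exists_sing (a1 a2 a3 a4 a6 : F)
    (hΔ : -(a1^2+4*a2)^2*(a1^2*a6+4*a2*a6-a1*a3*a4+a2*a3^2-a4^2)
        - 8*(2*a4+a1*a3)^3 - 27*(a3^2+4*a6)^2
        + 9*(a1^2+4*a2)*(2*a4+a1*a3)*(a3^2+4*a6) = 0) :
    ∃ r t : F, 2*t + a1*r + a3 = 0 ∧ a1*t = 3*r^2 + 2*a2*r + a4 ∧
      t^2 + a1*r*t + a3*t = r^3 + a2*r^2 + a4*r + a6 := by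
  by_cases h2 : (2:F) = 0
  · -- characteristic 2
    by_cases ha1 : a1 = 0
    · have ha3 : a3 = 0 := by
        have h4 : a3 ^ 4 = 0 := by
          linear_combination hΔ
            - (-96*a3*a4^2 + 144*a2*a3*a6 + 36*a2*a3^3 + 16*a2^2*a3*a4 + 72*a1*a4*a6
              - 30*a1*a3^2*a4 + 8*a1*a2*a4^2 - 48*a1*a2^2*a6 - 8*a1*a2^2*a3^2
              + 36*a1^2*a3*a6 + a1^2*a3^3 + 8*a1^2*a2*a3*a4 + a1^3*a4^2 - 12*a1^3*a2*a6
              - a1^3*a2*a3^2 + a1^4*a3*a4 - a1^5*a6) * ha1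
            - (-216*a6^2 - 32*a4^3 - 108*a3^2*a6 - 14*a3^4 + 144*a2*a4*a6
              + 36*a2*a3^2*a4 + 8*a2^2*a4^2 - 32*a2^3*a6 - 8*a2^3*a3^2) * h2
        exact pow_eq_zero_iff (by norm_num : (4:ℕ) ≠ 0) |>.mp h4
      obtain ⟨r, hr⟩ := aux_exists_sq h2 a4
      obtain ⟨t, ht⟩ := aux_exists_sq h2 (r^3 + a2*r^2 + a4*r + a6)
      refine ⟨r, t, ?_, ?_, ?_⟩
      · linear_combination t * h2 + r * ha1 + ha3
      · linear_combination t * ha1 - hr - (r^2 + a2*r + a4) * h2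
      · linear_combination ht + (r*t) * ha1 + t * ha3
    · refine ⟨a3 / a1, (3*a3^2 + 2*a2*a3*a1 + a4*a1^2) / a1^3, ?_, ?_, ?_⟩
      · field_simp
        linear_combination (2*a3*a2*a1 + a3*a1^3 + 3*a3^2 + a1^2*a4) * h2
      · field_simp
      · field_simp
        linear_combination hΔ
          + (216*a6^2 + 32*a4^3 + 108*a3^2*a6 + 18*a3^4 - 144*a2*a4*a6 - 36*a2*a3^2*a4
            - 8*a2^2*a4^2 + 32*a2^3*a6 + 8*a2^3*a3^2 + 48*a1*a3*a4^2 - 72*a1*a2*a3*a6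
            - 12*a1*a2*a3^3 - 8*a1*a2^2*a3*a4 - 36*a1^2*a4*a6 + 18*a1^2*a3^2*a4
            - 4*a1^2*a2*a4^2 + 24*a1^2*a2^2*a6 + 6*a1^2*a2^2*a3^2 - 18*a1^3*a3*a6
            + 2*a1^3*a3^3 - 2*a1^3*a2*a3*a4 + 6*a1^4*a2*a6 + 2*a1^4*a2*a3^2) * h2
  · -- characteristic ≠ 2
    have h4 : (4:F) ≠ 0 := by
      intro h
      rcases mul_eq_zero.mp (show (2:F)*2 = 0 by linear_combination h) with h' | h' <;>
        exact h2 h'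
    have hD : (a1^2+4*a2)^2*(16*a4+8*a1*a3)^2 - 4*(a1^2+4*a2)^3*(16*a3^2+64*a6)
        - 4*(16*a4+8*a1*a3)^3 - 27*(16*a3^2+64*a6)^2
        + 18*(a1^2+4*a2)*(16*a4+8*a1*a3)*(16*a3^2+64*a6) = 0 := by
      linear_combination 256 * hΔ
    obtain ⟨r', hr1, hr2⟩ := cubic_double_root h2 (a1^2+4*a2) (16*a4+8*a1*a3)
      (16*a3^2+64*a6) hD
    have h8 : (8:F) ≠ 0 := by
      intro h
      rcases mul_eq_zero.mp (show (2:F)*4 = 0 by linear_combination h) with h' | h'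
      · exact h2 h'
      · exact h4 h'
    refine ⟨r'/4, (-(a1*r') - 4*a3)/8, ?_, ?_, ?_⟩
    · field_simp
      ring
    · field_simp
      linear_combination (-8 : F) * hr2
    · field_simp
      linear_combination (-64 : F) * hr1

end Aux

/-- The parametrization of singular Weierstrass equations by `(a₁, a₂)` and the
singular point `(r, t)`. -/
private def psiMap {F : Type*} [Field F] (x : F × F × F × F) : F × F × F × F × F :=
  (x.1, x.2.1, -2*x.2.2.2 - x.1*x.2.2.1,
    x.1*x.2.2.2 - 3*x.2.2.1^2 - 2*x.2.1*x.2.2.1,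
    -x.2.2.2^2 - x.1*x.2.2.1*x.2.2.2 + 2*x.2.2.1^3 + x.2.1*x.2.2.1^2)

private lemma psiMap_injective {F : Type*} [Field F] :
    Function.Injective (psiMap (F := F)) := by
  rintro ⟨a1, a2, r, t⟩ ⟨b1, b2, r', t'⟩ h
  simp only [psiMap, Prod.mk.injEq] at h
  obtain ⟨h1, h2, e3, e4, e5⟩ := h
  subst h1; subst h2
  have hr : r = r' := by
    by_contra hne
    have hu : r' - r ≠ 0 := sub_ne_zero.mpr fun h => hne h.symm
    have hA : (r' - r) * ((a1^2 + 4*a2 + 12*r) + 6*(r' - r)) = 0 := by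
      linear_combination 2 * e4 + a1 * e3
    have hB : (r' - r)^2 * ((a1^2 + 4*a2 + 12*r) + 8*(r' - r)) = 0 := by
      linear_combination 4*t*e3 - 4*r*e4 - 4*e5 + (2*(t'-t) + a1*(r'-r)) * e3
    have hX : (a1^2 + 4*a2 + 12*r) + 6*(r' - r) = 0 :=
      (mul_eq_zero.mp hA).resolve_left hu
    have hY : (a1^2 + 4*a2 + 12*r) + 8*(r' - r) = 0 :=
      (mul_eq_zero.mp hB).resolve_left (pow_ne_zero 2 hu)
    have h2r : (2:F) * (r' - r) = 0 := by linear_combination hY - hX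
    have h20 : (2:F) = 0 := (mul_eq_zero.mp h2r).resolve_right hu
    have ha1r : a1 * (r' - r) = 0 := by linear_combination e3 - (t' - t) * h20
    have ha1 : a1 = 0 := (mul_eq_zero.mp ha1r).resolve_right hu
    have hsq : (r' - r)^2 = 0 := by
      linear_combination e4 + (t' - t) * ha1 + (-3*r*(r'-r) - (r'-r)^2 - a2*(r'-r)) * h20
    exact hu (pow_eq_zero_iff (by norm_num : (2:ℕ) ≠ 0) |>.mp hsq)
  subst hr
  have ht : t = t' := by
    have hτ2 : 2*(t' - t) = 0 := by linear_combination e3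
    have hτa : a1*(t' - t) = 0 := by linear_combination -e4
    have hτ : (t' - t)^2 = 0 := by
      linear_combination e5 - t * hτ2 - r * hτa
    exact (sub_eq_zero.mp (pow_eq_zero_iff (by norm_num : (2:ℕ) ≠ 0) |>.mp hτ)).symm
  subst ht
  rfl

/-- Over a finite field with `q` elements, exactly `q^4` of the `q^5` long Weierstrass
equations are singular (have discriminant zero). -/
theorem singular_weierstrass_count (F : Type*) [Field F] [Fintype F] [DecidableEq F] :
    (Finset.univ.filter (fun a : F × F × F × F × F =>
      (WeierstrassCurve.mk a.1 a.2.1 a.2.2.1 a.2.2.2.1 a.2.2.2.2).Δ = 0)).card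
      = Fintype.card F ^ 4 := by
  have himg : (Finset.univ.filter (fun a : F × F × F × F × F =>
      (WeierstrassCurve.mk a.1 a.2.1 a.2.2.1 a.2.2.2.1 a.2.2.2.2).Δ = 0))
      = Finset.univ.image (psiMap (F := F)) := by
    ext ⟨a1, a2, a3, a4, a6⟩
    simp only [Finset.mem_filter, Finset.mem_univ, true_and, Finset.mem_image]
    constructor
    · intro hΔ
      simp only [WeierstrassCurve.Δ, WeierstrassCurve.b₂, WeierstrassCurve.b₄,
        WeierstrassCurve.b₆, WeierstrassCurve.b₈] at hΔ
      have hΔ' : -(a1^2+4*a2)^2*(a1^2*a6+4*a2*a6-a1*a3*a4+a2*a3^2-a4^2)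
          - 8*(2*a4+a1*a3)^3 - 27*(a3^2+4*a6)^2
          + 9*(a1^2+4*a2)*(2*a4+a1*a3)*(a3^2+4*a6) = 0 := by
        linear_combination hΔ
      obtain ⟨r, t, hY, hX, hE⟩ := exists_sing a1 a2 a3 a4 a6 hΔ'
      refine ⟨(a1, a2, r, t), ?_⟩
      simp only [psiMap, Prod.mk.injEq]
      refine ⟨trivial, trivial, by linear_combination -hY, by linear_combination hX, ?_⟩
      linear_combination hE - t * hY - r * hX
    · rintro ⟨⟨b1, b2, r, t⟩, h⟩
      simp only [psiMap, Prod.mk.injEq] at h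
      obtain ⟨h1, h2, h3, h4, h6⟩ := h
      subst h1; subst h2; subst h3; subst h4; subst h6
      simp only [WeierstrassCurve.Δ, WeierstrassCurve.b₂, WeierstrassCurve.b₄,
        WeierstrassCurve.b₆, WeierstrassCurve.b₈]
      ring
  rw [himg, Finset.card_image_of_injective _ psiMap_injective, Finset.card_univ]
  simp only [Fintype.card_prod]
  ring
end

section
/- For every prime p, the Haar measure of the set U_p = {(a,b) ∈ Z_p^2 : a^3 ≡ b^2 (mod p^2)} equals 2/p^2 - 1/p^3. -/
open MeasureTheory

section Counting

variable {p : ℕ} [hp : Fact p.Prime]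

private lemma neZero_pp : NeZero (p ^ 2) := ⟨pow_ne_zero 2 hp.out.ne_zero⟩

private lemma nonunit_iff_sq_zero (a : ZMod (p ^ 2)) : ¬ IsUnit a ↔ a ^ 2 = 0 := by
  haveI : NeZero (p ^ 2) := neZero_pp
  have hcast : ((a.val : ℕ) : ZMod (p ^ 2)) = a := by
    rw [ZMod.natCast_val, ZMod.cast_id]
  have hiff : IsUnit a ↔ ¬ p ∣ a.val := by
    conv_lhs => rw [← hcast]
    rw [ZMod.isUnit_iff_coprime, Nat.coprime_pow_right_iff two_pos, Nat.coprime_comm]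
    exact hp.out.coprime_iff_not_dvd
  constructor
  · intro h
    obtain ⟨c, hc⟩ : p ∣ a.val := by
      by_contra h'
      exact h (hiff.mpr h')
    have ha : a = (p : ZMod (p ^ 2)) * (c : ZMod (p ^ 2)) := by
      rw [← hcast, hc]; push_cast; ring
    have hpsq : ((p : ZMod (p ^ 2))) ^ 2 = 0 := by
      rw [← Nat.cast_pow, ZMod.natCast_self]
    rw [ha, mul_pow, hpsq, zero_mul]
  · intro h hu
    haveI : Fact (1 < p ^ 2) := ⟨by nlinarith [hp.out.two_le]⟩
    have := hu.pow 2
    rw [h] at this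
    exact not_isUnit_zero this

private lemma card_units_pp : Fintype.card (ZMod (p ^ 2))ˣ = p ^ 2 - p := by
  haveI : NeZero (p ^ 2) := neZero_pp
  rw [ZMod.card_units_eq_totient, Nat.totient_prime_pow hp.out two_pos]
  have h1 : p ^ (2 - 1) = p := by ring
  rw [h1, Nat.mul_sub, mul_one, sq]

private lemma card_isUnit_filter :
    (Finset.univ.filter (fun a : ZMod (p ^ 2) => IsUnit a)).card = p ^ 2 - p := by
  classical
  rw [← card_units_pp (p := p), ← Fintype.card_subtype]
  refine Fintype.card_congr ?_
  exact
    { toFun := fun a => a.2.unit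
      invFun := fun u => ⟨u, u.isUnit⟩
      left_inv := fun a => Subtype.ext a.2.unit_spec
      right_inv := fun u => Units.ext u.isUnit.unit_spec }

private lemma card_sq_zero_filter :
    (Finset.univ.filter (fun a : ZMod (p ^ 2) => a ^ 2 = 0)).card = p := by
  classical
  haveI : NeZero (p ^ 2) := neZero_pp
  have hsplit :=
    Finset.card_filter_add_card_filter_not
      (s := (Finset.univ : Finset (ZMod (p ^ 2)))) (p := fun a => IsUnit a)
  have hcard : (Finset.univ : Finset (ZMod (p ^ 2))).card = p ^ 2 := by
    rw [Finset.card_univ, ZMod.card]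
  have heq : (Finset.univ.filter (fun a : ZMod (p ^ 2) => ¬ IsUnit a))
      = Finset.univ.filter (fun a : ZMod (p ^ 2) => a ^ 2 = 0) := by
    apply Finset.filter_congr
    intro a _
    simp [nonunit_iff_sq_zero a]
  rw [card_isUnit_filter, heq, hcard] at hsplit
  have hle : p ≤ p ^ 2 := Nat.le_self_pow two_ne_zero p
  omega

private lemma card_unit_sols :
    ((Finset.univ.filter
        (fun y : ZMod (p ^ 2) × ZMod (p ^ 2) => y.1 ^ 3 = y.2 ^ 2)).filter
        (fun y => IsUnit y.1)).card = p ^ 2 - p := by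
  classical
  rw [← card_units_pp (p := p), ← Finset.card_univ]
  refine (Finset.card_bij
    (fun (u : (ZMod (p ^ 2))ˣ) _ => (((u : ZMod (p ^ 2)) ^ 2, (u : ZMod (p ^ 2)) ^ 3))) ?_ ?_ ?_).symm
  · intro u _
    simp only [Finset.mem_filter, Finset.mem_univ, true_and]
    constructor
    · ring
    · exact u.isUnit.pow 2
  · intro u _ v _ h
    have h2 : u ^ 2 = v ^ 2 := Units.ext (by
      simpa [Units.val_pow_eq_pow_val] using congrArg Prod.fst h)
    have h3 : u ^ 3 = v ^ 3 := Units.ext (by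
      simpa [Units.val_pow_eq_pow_val] using congrArg Prod.snd h)
    have : u ^ 3 * (u ^ 2)⁻¹ = v ^ 3 * (v ^ 2)⁻¹ := by rw [h2, h3]
    simpa [pow_succ, mul_assoc] using this
  · intro y hy
    simp only [Finset.mem_filter, Finset.mem_univ, true_and] at hy
    obtain ⟨heq, hu1⟩ := hy
    have hu2 : IsUnit y.2 := by
      have : IsUnit (y.2 ^ 2) := heq ▸ hu1.pow 3
      exact (isUnit_pow_iff two_ne_zero).mp this
    obtain ⟨ua, hua⟩ := hu1
    obtain ⟨ub, hub⟩ := hu2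
    have key : ub ^ 2 = ua ^ 3 := Units.ext (by
      rw [Units.val_pow_eq_pow_val, Units.val_pow_eq_pow_val, hua, hub, heq])
    refine ⟨ub * ua⁻¹, Finset.mem_univ _, ?_⟩
    have e1 : (ub * ua⁻¹) ^ 2 = ua := by
      have h' : (ub * ua⁻¹) ^ 2 = ub ^ 2 * (ua⁻¹) ^ 2 := mul_pow _ _ 2
      rw [h', key]
      group
    have e2 : (ub * ua⁻¹) ^ 3 = ub := by
      have h' : (ub * ua⁻¹) ^ 3 = ub ^ 3 * (ua⁻¹) ^ 3 := mul_pow _ _ 3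
      rw [h', show ub ^ 3 = ub * ub ^ 2 from by group, mul_assoc, key]
      group
    refine Prod.ext ?_ ?_ <;>
      simp only [← hua, ← hub, ← Units.val_pow_eq_pow_val, e1, e2]

private lemma card_sols :
    (Finset.univ.filter
      (fun y : ZMod (p ^ 2) × ZMod (p ^ 2) => y.1 ^ 3 = y.2 ^ 2)).card
      = 2 * p ^ 2 - p := by
  classical
  have hsplit :=
    Finset.card_filter_add_card_filter_not
      (s := Finset.univ.filter
        (fun y : ZMod (p ^ 2) × ZMod (p ^ 2) => y.1 ^ 3 = y.2 ^ 2))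
      (p := fun y => IsUnit y.1)
  have hT2 : ((Finset.univ.filter
      (fun y : ZMod (p ^ 2) × ZMod (p ^ 2) => y.1 ^ 3 = y.2 ^ 2)).filter
      (fun y => ¬ IsUnit y.1)).card = p * p := by
    have hset : ((Finset.univ.filter
        (fun y : ZMod (p ^ 2) × ZMod (p ^ 2) => y.1 ^ 3 = y.2 ^ 2)).filter
        (fun y => ¬ IsUnit y.1))
        = (Finset.univ.filter (fun a : ZMod (p ^ 2) => a ^ 2 = 0)) ×ˢ
          (Finset.univ.filter (fun a : ZMod (p ^ 2) => a ^ 2 = 0)) := by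
      ext y
      simp only [Finset.mem_filter, Finset.mem_univ, true_and, Finset.mem_product]
      constructor
      · rintro ⟨heq, hn⟩
        have h1 : y.1 ^ 2 = 0 := (nonunit_iff_sq_zero y.1).mp hn
        have h3 : y.1 ^ 3 = 0 := by
          have e : y.1 ^ 3 = y.1 ^ 2 * y.1 := by ring
          rw [e, h1, zero_mul]
        exact ⟨h1, by rw [← heq, h3]⟩
      · rintro ⟨h1, h2⟩
        have h3 : y.1 ^ 3 = 0 := by
          have e : y.1 ^ 3 = y.1 ^ 2 * y.1 := by ring
          rw [e, h1, zero_mul]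
        exact ⟨by rw [h3, h2], (nonunit_iff_sq_zero y.1).mpr h1⟩
    rw [hset, Finset.card_product, card_sq_zero_filter]
  rw [card_unit_sols, hT2] at hsplit
  have hle : p ≤ p ^ 2 := Nat.le_self_pow two_ne_zero p
  have hpp : p * p = p ^ 2 := (sq p).symm
  omega

end Counting

/-- For every prime `p`, the normalized Haar measure of
`U_p = {(a,b) ∈ ℤ_p² : a³ ≡ b² mod p²}` equals `2/p² - 1/p³`. -/
theorem haar_measure_cube_eq_square (p : ℕ) [Fact p.Prime]
    [MeasurableSpace ℤ_[p]] [BorelSpace ℤ_[p]]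
    (μ : Measure (ℤ_[p] × ℤ_[p])) [μ.IsAddHaarMeasure] (hμ : μ Set.univ = 1) :
    μ {x : ℤ_[p] × ℤ_[p] | (p : ℤ_[p]) ^ 2 ∣ x.1 ^ 3 - x.2 ^ 2}
      = 2 / (p : ENNReal) ^ 2 - 1 / (p : ENNReal) ^ 3 := by
  classical
  have hpp := (Fact.out : p.Prime)
  haveI : NeZero (p ^ 2) := neZero_pp
  set F : ℤ_[p] × ℤ_[p] → ZMod (p ^ 2) × ZMod (p ^ 2) :=
    fun x => (PadicInt.toZModPow 2 x.1, PadicInt.toZModPow 2 x.2) with hF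
  set L : ZMod (p ^ 2) × ZMod (p ^ 2) → ℤ_[p] × ℤ_[p] :=
    fun t => ((t.1.val : ℤ_[p]), (t.2.val : ℤ_[p])) with hL
  have hker : ∀ y : ℤ_[p], PadicInt.toZModPow (p := p) 2 y = 0 ↔ (p : ℤ_[p]) ^ 2 ∣ y := by
    intro y
    rw [← RingHom.mem_ker, PadicInt.ker_toZModPow, Ideal.mem_span_singleton]
  have hFL : ∀ t, F (L t) = t := by
    intro t
    simp [hF, hL, map_natCast, ZMod.natCast_val, ZMod.cast_id]
  have hFadd : ∀ a b, F (a + b) = F a + F b := by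
    intro a b
    simp [hF, Prod.ext_iff, map_add]
  have hclosed : IsClosed (F ⁻¹' {0}) := by
    have e : ∀ y : ℤ_[p],
        (PadicInt.toZModPow (p := p) 2 y = 0) ↔ ‖y‖ ≤ (p : ℝ) ^ (-(2 : ℕ) : ℤ) := by
      intro y
      rw [hker, ← Ideal.mem_span_singleton, ← PadicInt.norm_le_pow_iff_mem_span_pow]
    have hset : F ⁻¹' {0} =
        {x : ℤ_[p] × ℤ_[p] | ‖x.1‖ ≤ (p : ℝ) ^ (-(2 : ℕ) : ℤ)} ∩
        {x : ℤ_[p] × ℤ_[p] | ‖x.2‖ ≤ (p : ℝ) ^ (-(2 : ℕ) : ℤ)} := by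
      ext x
      simp only [Set.mem_preimage, Set.mem_singleton_iff, Prod.ext_iff, hF,
        Set.mem_inter_iff, Set.mem_setOf_eq, Prod.fst_zero, Prod.snd_zero]
      rw [e, e]
    rw [hset]
    exact (isClosed_le (continuous_fst.norm) continuous_const).inter
      (isClosed_le (continuous_snd.norm) continuous_const)
  have hpre : ∀ t, F ⁻¹' {t} = (fun x => L (-t) + x) ⁻¹' (F ⁻¹' {0}) := by
    intro t
    ext x
    simp only [Set.mem_preimage, Set.mem_singleton_iff, hFadd, hFL]
    rw [neg_add_eq_zero]
    exact eq_comm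
  have hmeas : ∀ t, MeasurableSet (F ⁻¹' {t}) := by
    intro t
    rw [hpre t]
    exact (hclosed.preimage (continuous_const.add continuous_id)).measurableSet
  have hμt : ∀ t, μ (F ⁻¹' {t}) = μ (F ⁻¹' {0}) := by
    intro t
    rw [hpre t]
    exact measure_preimage_add μ _ _
  have key : ∀ s : Finset (ZMod (p ^ 2) × ZMod (p ^ 2)),
      μ (F ⁻¹' (s : Set (ZMod (p ^ 2) × ZMod (p ^ 2))))
        = s.card * μ (F ⁻¹' {0}) := by
    intro s
    have hs : F ⁻¹' (s : Set (ZMod (p ^ 2) × ZMod (p ^ 2))) = ⋃ t ∈ s, F ⁻¹' {t} := by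
      ext x; simp
    rw [hs, measure_biUnion_finset ?_ (fun t _ => hmeas t)]
    · rw [Finset.sum_congr rfl (fun t _ => hμt t), Finset.sum_const, nsmul_eq_mul]
    · intro a _ b _ hab
      exact Set.disjoint_singleton.mpr hab |>.preimage F
  have hq0 : (p : ENNReal) ≠ 0 := by
    exact_mod_cast Nat.cast_ne_zero.mpr hpp.ne_zero
  have hqt : (p : ENNReal) ≠ ⊤ := ENNReal.natCast_ne_top p
  have hμ0 : μ (F ⁻¹' {0}) = 1 / (p : ENNReal) ^ 4 := by
    have huniv := key Finset.univ
    rw [Finset.coe_univ, Set.preimage_univ, hμ, Finset.card_univ] at huniv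
    have hcard : ((Fintype.card (ZMod (p ^ 2) × ZMod (p ^ 2)) : ℕ) : ENNReal)
        = (p : ENNReal) ^ 4 := by
      rw [Fintype.card_prod, ZMod.card]
      push_cast
      ring
    rw [hcard] at huniv
    exact (ENNReal.eq_div_iff (pow_ne_zero 4 hq0) (ENNReal.pow_ne_top hqt)).mpr huniv.symm
  have hS : {x : ℤ_[p] × ℤ_[p] | (p : ℤ_[p]) ^ 2 ∣ x.1 ^ 3 - x.2 ^ 2}
      = F ⁻¹' ((Finset.univ.filter
          (fun y : ZMod (p ^ 2) × ZMod (p ^ 2) => y.1 ^ 3 = y.2 ^ 2) : Finset _) :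
            Set (ZMod (p ^ 2) × ZMod (p ^ 2))) := by
    ext x
    simp only [Set.mem_setOf_eq, Set.mem_preimage, Finset.coe_filter, Finset.mem_univ,
      true_and, Set.mem_setOf_eq, hF]
    rw [← hker, map_sub, map_pow, map_pow, sub_eq_zero]
  rw [hS, key, card_sols, hμ0]
  have hle : p ≤ 2 * p ^ 2 := by nlinarith [hpp.two_le]
  have hcast2 : ((2 * p ^ 2 - p : ℕ) : ENNReal) = 2 * (p : ENNReal) ^ 2 - (p : ENNReal) := by
    rw [ENNReal.natCast_sub]
    push_cast
    ring_nf
  rw [hcast2, mul_one_div, ENNReal.sub_div (fun _ _ => pow_ne_zero 4 hq0)]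
  congr 1
  · show 2 * (p : ENNReal) ^ 2 / (p : ENNReal) ^ 4 = 2 / (p : ENNReal) ^ 2
    rw [show ((p : ENNReal)) ^ 4 = (p : ENNReal) ^ 2 * (p : ENNReal) ^ 2 from by ring]
    exact ENNReal.mul_div_mul_right 2 ((p : ENNReal) ^ 2) (pow_ne_zero 2 hq0)
      (ENNReal.pow_ne_top hqt)
  · show (p : ENNReal) / (p : ENNReal) ^ 4 = 1 / (p : ENNReal) ^ 3
    rw [show ((p : ENNReal)) ^ 4 = (p : ENNReal) ^ 3 * (p : ENNReal) from by ring]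
    nth_rewrite 1 [show ((p : ENNReal)) = 1 * (p : ENNReal) from (one_mul _).symm]
    exact ENNReal.mul_div_mul_right 1 ((p : ENNReal) ^ 3) hq0 hqt
end

section
/- The natural density of the set of square-free integers is 1/ζ(2) = 6/π^2, i.e. lim_{X→∞} #{n : |n| ≤ X, n square-free}/(2X) = ∏_p (1 − 1/p^2). -/
open Filter Real

section Aux

open Finset ArithmeticFunction
open scoped ArithmeticFunction.Moebius

noncomputable def sqPart (n : ℕ) : ℕ := ∏ p ∈ n.primeFactors, p ^ (n.factorization p / 2)

lemma sqPart_ne_zero (n : ℕ) : sqPart n ≠ 0 := by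
  apply Finset.prod_ne_zero_iff.mpr
  intro p hp
  exact pow_ne_zero _ (Nat.Prime.ne_zero (Nat.prime_of_mem_primeFactors hp))

lemma sqPart_factorization (n : ℕ) (p : ℕ) :
    (sqPart n).factorization p = n.factorization p / 2 := by
  rw [sqPart, Nat.factorization_prod (fun q hq => pow_ne_zero _
    (Nat.Prime.ne_zero (Nat.prime_of_mem_primeFactors hq)))]
  simp only [Finset.sum_apply', Nat.factorization_pow]
  by_cases hp : p ∈ n.primeFactors
  · rw [Finset.sum_eq_single p]
    · rw [Nat.Prime.factorization (Nat.prime_of_mem_primeFactors hp)]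
      simp
    · intro q hq hqp
      rw [Nat.Prime.factorization (Nat.prime_of_mem_primeFactors hq)]
      simp [hqp]
    · intro h; exact absurd hp h
  · have h0 : n.factorization p = 0 := by
      by_contra h
      exact hp ((Nat.support_factorization n) ▸ Finsupp.mem_support_iff.mpr h)
    rw [h0, Nat.zero_div]
    refine Finset.sum_eq_zero fun q hq => ?_
    rw [Nat.Prime.factorization (Nat.prime_of_mem_primeFactors hq)]
    simp only [Finsupp.smul_apply, Finsupp.single_apply]
    rcases eq_or_ne q p with rfl | hqp
    · exact absurd hq hp
    · simp [hqp]

lemma sq_dvd_iff_dvd_sqPart {n d : ℕ} (hn : n ≠ 0) : d ^ 2 ∣ n ↔ d ∣ sqPart n := by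
  rcases eq_or_ne d 0 with rfl | hd
  · simp [hn, sqPart_ne_zero n, Ne.symm]
  · rw [← Nat.factorization_le_iff_dvd (pow_ne_zero _ hd) hn,
      ← Nat.factorization_le_iff_dvd hd (sqPart_ne_zero n)]
    simp only [Finsupp.le_def, Nat.factorization_pow, Finsupp.smul_apply, sqPart_factorization]
    exact forall_congr' fun p => by simp only [smul_eq_mul]; omega

lemma sqPart_eq_one_iff {n : ℕ} (hn : n ≠ 0) : sqPart n = 1 ↔ Squarefree n := by
  rw [Nat.squarefree_iff_factorization_le_one hn]
  constructor
  · intro h p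
    have := sqPart_factorization n p
    rw [h] at this
    simp only [Nat.factorization_one, Finsupp.coe_zero, Pi.zero_apply] at this
    omega
  · intro h
    rw [sqPart]
    apply Finset.prod_eq_one
    intro p hp
    have := h p
    have : n.factorization p / 2 = 0 := by omega
    simp [this]

lemma sum_moebius_divisors (m : ℕ) :
    ∑ d ∈ m.divisors, μ d = if m = 1 then 1 else 0 := by
  rw [← coe_mul_zeta_apply, moebius_mul_coe_zeta, one_apply]

lemma moebius_sum_sq_dvd {n : ℕ} (hn : n ≠ 0) :
    ∑ d ∈ n.divisors.filter (fun d => d ^ 2 ∣ n), μ d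
      = if Squarefree n then 1 else 0 := by
  have hset : n.divisors.filter (fun d => d ^ 2 ∣ n) = (sqPart n).divisors := by
    ext d
    simp only [Finset.mem_filter, Nat.mem_divisors]
    constructor
    · rintro ⟨⟨hd, _⟩, hsq⟩
      exact ⟨(sq_dvd_iff_dvd_sqPart hn).mp hsq, sqPart_ne_zero n⟩
    · rintro ⟨hd, _⟩
      have hsq := (sq_dvd_iff_dvd_sqPart hn).mpr hd
      exact ⟨⟨dvd_trans (dvd_pow_self d two_ne_zero) hsq, hn⟩, hsq⟩
  rw [hset, sum_moebius_divisors]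
  simp only [sqPart_eq_one_iff hn]

/-- count of positive squarefree integers up to `N`. -/
def Qsf (N : ℕ) : ℕ := ((Finset.Ioc 0 N).filter Squarefree).card

lemma Qsf_eq_sum (N : ℕ) :
    (Qsf N : ℤ) = ∑ d ∈ Finset.Ioc 0 N, μ d * (N / d ^ 2 : ℕ) := by
  have hcard : ∀ d : ℕ, (N / d ^ 2 : ℕ) = ((Finset.Ioc 0 N).filter (fun m => d ^ 2 ∣ m)).card := by
    intro d
    rw [Nat.Ioc_filter_dvd_card_eq_div]
  calc (Qsf N : ℤ)
      = ∑ m ∈ Finset.Ioc 0 N, if Squarefree m then (1 : ℤ) else 0 := by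
        rw [Qsf, Finset.sum_ite, Finset.sum_const, Finset.sum_const]
        simp
    _ = ∑ m ∈ Finset.Ioc 0 N, ∑ d ∈ m.divisors.filter (fun d => d ^ 2 ∣ m), μ d := by
        refine Finset.sum_congr rfl fun m hm => ?_
        rw [moebius_sum_sq_dvd (by simp at hm; omega)]
    _ = ∑ m ∈ Finset.Ioc 0 N, ∑ d ∈ (Finset.Ioc 0 N).filter (fun d => d ^ 2 ∣ m), μ d := by
        refine Finset.sum_congr rfl fun m hm => ?_
        simp only [Finset.mem_Ioc] at hm
        congr 1
        ext d
        simp only [Finset.mem_filter, Nat.mem_divisors, Finset.mem_Ioc]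
        constructor
        · rintro ⟨⟨hd, _⟩, hsq⟩
          have hd0 : d ≠ 0 := by rintro rfl; rw [zero_dvd_iff] at hd; omega
          exact ⟨⟨Nat.pos_of_ne_zero hd0, le_trans (Nat.le_of_dvd (by omega) hd) hm.2⟩, hsq⟩
        · rintro ⟨_, hsq⟩
          exact ⟨⟨dvd_trans (dvd_pow_self d two_ne_zero) hsq, by omega⟩, hsq⟩
    _ = ∑ d ∈ Finset.Ioc 0 N, ∑ m ∈ (Finset.Ioc 0 N).filter (fun m => d ^ 2 ∣ m), μ d := by
        simp only [Finset.sum_filter]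
        exact Finset.sum_comm
    _ = ∑ d ∈ Finset.Ioc 0 N, μ d * (N / d ^ 2 : ℕ) := by
        refine Finset.sum_congr rfl fun d _ => ?_
        rw [Finset.sum_const, hcard d]
        push_cast
        ring

lemma summable_bound : Summable (fun d : ℕ => 1 / (d : ℝ) ^ 2) :=
  Real.summable_one_div_nat_pow.mpr one_lt_two

lemma summable_muf : Summable (fun d : ℕ => ‖(μ d : ℝ) / (d : ℝ) ^ 2‖) := by
  refine summable_bound.of_norm_bounded fun d => ?_
  rw [norm_norm, norm_div, norm_pow]
  rcases eq_or_ne d 0 with rfl | hd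
  · simp
  · rw [Real.norm_natCast]
    have h1 : ‖(μ d : ℝ)‖ ≤ 1 := by
      rw [Int.norm_cast_real, Int.norm_eq_abs]
      exact_mod_cast abs_moebius_le_one
    have hd2 : (0 : ℝ) < (d : ℝ) ^ 2 := by positivity
    exact (div_le_div_iff_of_pos_right hd2).mpr h1
  
lemma tendsto_floor_div (d : ℕ) (hd : 0 < d) :
    Tendsto (fun N : ℕ => ((N / d ^ 2 : ℕ) : ℝ) / N) atTop (nhds (1 / (d : ℝ) ^ 2)) := by
  have hd2 : (0 : ℝ) < (d : ℝ) ^ 2 := by positivity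
  have key : ∀ N : ℕ, (N : ℝ) / (d : ℝ) ^ 2 - 1 ≤ ((N / d ^ 2 : ℕ) : ℝ) := by
    intro N
    have h1 : N % d ^ 2 < d ^ 2 := Nat.mod_lt _ (by positivity)
    have h2 : ((d : ℝ) ^ 2) * ((N / d ^ 2 : ℕ) : ℝ) + ((N % d ^ 2 : ℕ) : ℝ) = N := by
      exact_mod_cast congrArg (Nat.cast : ℕ → ℝ) (Nat.div_add_mod N (d ^ 2))
    have h1' : ((N % d ^ 2 : ℕ) : ℝ) < (d : ℝ) ^ 2 := by exact_mod_cast h1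
    rw [div_sub_one hd2.ne', div_le_iff₀ hd2]
    nlinarith
  apply tendsto_of_tendsto_of_tendsto_of_le_of_le'
      (g := fun N : ℕ => 1 / (d : ℝ) ^ 2 - 1 / N) (h := fun N : ℕ => 1 / (d : ℝ) ^ 2)
  · have h0 := (tendsto_const_nhds (x := 1 / (d : ℝ) ^ 2)
      (f := atTop (α := ℕ))).sub tendsto_one_div_atTop_nhds_zero_nat
    simpa using h0
  · exact tendsto_const_nhds
  · filter_upwards [eventually_ge_atTop 1] with N hN
    have hN0 : (0 : ℝ) < N := by exact_mod_cast hN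
    have h3 : ((N : ℝ) / (d : ℝ) ^ 2 - 1) / N = 1 / (d : ℝ) ^ 2 - 1 / N := by
      field_simp
    rw [← h3]
    gcongr
    exact key N
  · filter_upwards [eventually_ge_atTop 1] with N hN
    have hN0 : (0 : ℝ) < N := by exact_mod_cast hN
    have h4 : ((N / d ^ 2 : ℕ) : ℝ) ≤ (N : ℝ) / (d : ℝ) ^ 2 := by
      exact_mod_cast Nat.cast_div_le
    have h5 : (N : ℝ) / (d : ℝ) ^ 2 / N = 1 / (d : ℝ) ^ 2 := by
      field_simp
    calc ((N / d ^ 2 : ℕ) : ℝ) / N ≤ (N : ℝ) / (d : ℝ) ^ 2 / N := by gcongr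
      _ = 1 / (d : ℝ) ^ 2 := h5

lemma floor_div_le_aux {d N : ℕ} (hd : 0 < d) (hN : 0 < N) :
    ((N / d ^ 2 : ℕ) : ℝ) / N ≤ 1 / (d : ℝ) ^ 2 := by
  have hd2 : (0 : ℝ) < (d : ℝ) ^ 2 := by positivity
  have hN0 : (0 : ℝ) < N := by exact_mod_cast hN
  have h4 : ((N / d ^ 2 : ℕ) : ℝ) ≤ (N : ℝ) / (d : ℝ) ^ 2 := by exact_mod_cast Nat.cast_div_le
  have h5 : (N : ℝ) / (d : ℝ) ^ 2 / N = 1 / (d : ℝ) ^ 2 := by field_simp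
  calc ((N / d ^ 2 : ℕ) : ℝ) / N ≤ (N : ℝ) / (d : ℝ) ^ 2 / N := by gcongr
    _ = 1 / (d : ℝ) ^ 2 := h5

noncomputable def Aval : ℝ := ∑' d : ℕ, (μ d : ℝ) / (d : ℝ) ^ 2

lemma tendsto_Qsf_div :
    Tendsto (fun N : ℕ => (Qsf N : ℝ) / N) atTop (nhds Aval) := by
  set F : ℕ → ℕ → ℝ := fun N d => (μ d : ℝ) * ((N / d ^ 2 : ℕ) : ℝ) / N with hF
  have hQ : ∀ N : ℕ, (Qsf N : ℝ) / N = ∑' d, F N d := by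
    intro N
    have h1 : (Qsf N : ℝ) = ∑ d ∈ Finset.Ioc 0 N, (μ d : ℝ) * ((N / d ^ 2 : ℕ) : ℝ) := by
      have := congrArg (Int.cast : ℤ → ℝ) (Qsf_eq_sum N)
      push_cast at this
      exact this
    have h2 : ∑' d, F N d = ∑ d ∈ Finset.Ioc 0 N, F N d := by
      apply tsum_eq_sum
      intro d hd
      simp only [Finset.mem_Ioc, not_and_or, not_le, Nat.lt_one_iff, not_lt,
        Nat.le_zero] at hd
      rcases hd with rfl | hd
      · simp [hF]
      · have : N < d ^ 2 := lt_of_lt_of_le hd (Nat.le_self_pow two_ne_zero d)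
        simp [hF, Nat.div_eq_of_lt this]
    rw [h2, h1, Finset.sum_div]
  have hgoal : Tendsto (fun N : ℕ => ∑' d, F N d) atTop
      (nhds (∑' d : ℕ, (μ d : ℝ) / (d : ℝ) ^ 2)) := by
    apply tendsto_tsum_of_dominated_convergence (bound := fun d : ℕ => 1 / (d : ℝ) ^ 2)
      summable_bound
    · intro d
      rcases Nat.eq_zero_or_pos d with rfl | hd
      · simpa [hF] using tendsto_const_nhds
      · have h := (tendsto_floor_div d hd).const_mul ((μ d : ℝ))
        rw [show (μ d : ℝ) / (d : ℝ) ^ 2 = (μ d : ℝ) * (1 / (d : ℝ) ^ 2) by ring]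
        refine h.congr ?_
        intro N
        simp only [hF]
        ring
    · filter_upwards [eventually_ge_atTop 1] with N hN d
      rcases Nat.eq_zero_or_pos d with rfl | hd
      · simp [hF]
      · have hb := floor_div_le_aux hd hN
        have hmu : ‖(μ d : ℝ)‖ ≤ 1 := by
          rw [Int.norm_cast_real, Int.norm_eq_abs]
          exact_mod_cast abs_moebius_le_one
        have : ‖F N d‖ = ‖(μ d : ℝ)‖ * (((N / d ^ 2 : ℕ) : ℝ) / N) := by
          show ‖(μ d : ℝ) * ((N / d ^ 2 : ℕ) : ℝ) / (N : ℝ)‖ = _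
          rw [mul_div_assoc, norm_mul]
          congr 1
          rw [Real.norm_eq_abs, abs_of_nonneg (by positivity)]
        rw [this]
        calc ‖(μ d : ℝ)‖ * (((N / d ^ 2 : ℕ) : ℝ) / N) ≤ 1 * (1 / (d : ℝ) ^ 2) := by
              apply mul_le_mul hmu hb (by positivity) zero_le_one
          _ = 1 / (d : ℝ) ^ 2 := one_mul _
  rw [show (fun N : ℕ => (Qsf N : ℝ) / N) = fun N => ∑' d, F N d from funext hQ]
  exact hgoal

lemma hasProd_one_sub : HasProd (fun p : Nat.Primes => 1 - 1 / (p : ℝ) ^ 2) Aval := by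
  have hf1 : ((μ 1 : ℤ) : ℝ) / (1 : ℕ) ^ 2 = 1 := by simp
  have hmul : ∀ {m n : ℕ}, Nat.Coprime m n →
      ((μ (m * n) : ℤ) : ℝ) / ((m * n : ℕ) : ℝ) ^ 2
        = ((μ m : ℤ) : ℝ) / (m : ℝ) ^ 2 * (((μ n : ℤ) : ℝ) / (n : ℝ) ^ 2) := by
    intro m n hmn
    rw [isMultiplicative_moebius.map_mul_of_coprime hmn]
    push_cast
    ring
  have hsum := summable_muf
  have hf0 : ((μ 0 : ℤ) : ℝ) / ((0 : ℕ) : ℝ) ^ 2 = 0 := by simp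
  have h := EulerProduct.eulerProduct_hasProd (f := fun d : ℕ => (μ d : ℝ) / (d : ℝ) ^ 2)
    hf1 (fun {m n} h => hmul h) hsum hf0
  have hps : ∀ p : Nat.Primes,
      (∑' e : ℕ, ((μ ((p : ℕ) ^ e) : ℤ) : ℝ) / (((p : ℕ) ^ e : ℕ) : ℝ) ^ 2)
        = 1 - 1 / (p : ℝ) ^ 2 := by
    intro p
    have hp := p.2
    rw [tsum_eq_sum (s := {0, 1}) ?h]
    · rw [Finset.sum_pair (by norm_num)]
      rw [pow_zero, pow_one]
      have h1 : μ ((p : ℕ)) = -1 := moebius_apply_prime hp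
      simp [h1]
      ring
    · intro e he
      simp only [Finset.mem_insert, Finset.mem_singleton] at he
      push_neg at he
      rw [moebius_apply_prime_pow hp he.1]
      simp [he.2]
  rw [show (fun p : Nat.Primes => 1 - 1 / (p : ℝ) ^ 2) = fun p : Nat.Primes =>
      (∑' e : ℕ, ((μ ((p : ℕ) ^ e) : ℤ) : ℝ) / (((p : ℕ) ^ e : ℕ) : ℝ) ^ 2) from
    funext fun p => (hps p).symm]
  exact h

noncomputable def zetaTwoHom : ℕ →*₀ ℝ where
  toFun := fun n => 1 / (n : ℝ) ^ 2
  map_zero' := by simp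
  map_one' := by simp
  map_mul' := by
    intro m n
    push_cast
    rw [mul_pow]
    rw [div_mul_div_comm, one_mul]

lemma hasProd_inv_one_sub :
    HasProd (fun p : Nat.Primes => (1 - 1 / (p : ℝ) ^ 2)⁻¹) (π ^ 2 / 6) := by
  have hsum : Summable (fun n => ‖zetaTwoHom n‖) := by
    refine summable_bound.congr fun n => ?_
    show 1 / (n : ℝ) ^ 2 = ‖(1 : ℝ) / (n : ℝ) ^ 2‖
    rw [Real.norm_eq_abs, abs_of_nonneg (by positivity)]
  have h := EulerProduct.eulerProduct_completely_multiplicative_hasProd hsum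
  have hval : ∑' n : ℕ, zetaTwoHom n = π ^ 2 / 6 := hasSum_zeta_two.tsum_eq
  rw [hval] at h
  exact h

lemma one_sub_ne_zero (p : Nat.Primes) : (1 : ℝ) - 1 / (p : ℝ) ^ 2 ≠ 0 := by
  have hp2 : (2 : ℝ) ≤ (p : ℕ) := by exact_mod_cast p.2.two_le
  have : 1 / (p : ℝ) ^ 2 < 1 := by
    rw [div_lt_one (by positivity)]
    nlinarith
  linarith

lemma Aval_eq : Aval = 6 / π ^ 2 := by
  have hmul := hasProd_one_sub.mul hasProd_inv_one_sub
  have hone : HasProd (fun p : Nat.Primes =>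
      (1 - 1 / (p : ℝ) ^ 2) * (1 - 1 / (p : ℝ) ^ 2)⁻¹) 1 := by
    have : (fun p : Nat.Primes => (1 - 1 / (p : ℝ) ^ 2) * (1 - 1 / (p : ℝ) ^ 2)⁻¹)
        = fun _ => (1 : ℝ) := by
      funext p
      exact mul_inv_cancel₀ (one_sub_ne_zero p)
    rw [this]
    exact hasProd_one
  have := hmul.unique hone
  have hpi : (π : ℝ) ^ 2 ≠ 0 := by positivity
  field_simp at this ⊢
  linarith [this]

lemma card_eq {X : ℝ} (hX : 1 ≤ X) :
    Nat.card {n : ℤ // |(n : ℝ)| ≤ X ∧ Squarefree n} = 2 * Qsf ⌊X⌋₊ := by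
  set N := ⌊X⌋₊ with hN
  have hX0 : (0 : ℝ) ≤ X := le_trans zero_le_one hX
  have hchar : ∀ n : ℤ, (|(n : ℝ)| ≤ X ∧ Squarefree n) ↔
      (n.natAbs ∈ (Finset.Ioc 0 N).filter Squarefree ∧ n ≠ 0) := by
    intro n
    simp only [Finset.mem_filter, Finset.mem_Ioc]
    have h1 : |(n : ℝ)| = (n.natAbs : ℝ) := by rw [Nat.cast_natAbs, Int.cast_abs]
    constructor
    · rintro ⟨habs, hsq⟩
      have hn0 : n ≠ 0 := by rintro rfl; exact not_squarefree_zero hsq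
      refine ⟨⟨⟨?_, ?_⟩, Int.squarefree_natAbs.mpr hsq⟩, hn0⟩
      · simpa using Int.natAbs_pos.mpr hn0
      · rw [h1] at habs
        exact Nat.le_floor habs
    · rintro ⟨⟨⟨hp1, h2⟩, hsq⟩, hn0⟩
      refine ⟨?_, Int.squarefree_natAbs.mp hsq⟩
      have h3 : (n.natAbs : ℝ) ≤ X := le_trans (by exact_mod_cast h2) (Nat.floor_le hX0)
      rw [h1]
      exact h3
  let T := {m : ℕ // m ∈ (Finset.Ioc 0 N).filter Squarefree}
  have e : {n : ℤ // |(n : ℝ)| ≤ X ∧ Squarefree n} ≃ Bool × T := by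
    refine ⟨fun n => (decide (0 < n.1), ⟨n.1.natAbs, ((hchar n.1).mp n.2).1⟩),
      fun bm => ⟨if bm.1 then (bm.2.1 : ℤ) else -(bm.2.1 : ℤ), ?_⟩, ?_, ?_⟩
    · obtain ⟨b, m⟩ := bm
      have hm := m.2
      simp only [Finset.mem_filter, Finset.mem_Ioc] at hm
      apply (hchar _).mpr
      have hne : ((m.1 : ℤ)) ≠ 0 := by exact_mod_cast hm.1.1.ne'
      rcases b with _ | _ <;>
        simp only [Bool.false_eq_true, if_false, if_true, Int.natAbs_neg, Int.natAbs_natCast,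
          ne_eq, neg_eq_zero] <;>
        exact ⟨m.2, hne⟩
    · rintro ⟨n, hn⟩
      have hn0 : n ≠ 0 := ((hchar n).mp hn).2
      apply Subtype.ext
      simp only
      rcases lt_trichotomy n 0 with h | h | h
      · rw [if_neg (by simp [not_lt.mpr (le_of_lt h)])]
        omega
      · exact absurd h hn0
      · rw [if_pos (by simpa using h)]
        omega
    · rintro ⟨b, m⟩
      have hm := m.2
      simp only [Finset.mem_filter, Finset.mem_Ioc] at hm
      have hmpos : 0 < m.1 := hm.1.1
      have hmz : (0 : ℤ) < (m.1 : ℤ) := by exact_mod_cast hmpos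
      rcases b with _ | _
      · simp only [Bool.false_eq_true, if_false]
        refine Prod.ext ?_ (Subtype.ext ?_)
        · simp only [decide_eq_false_iff_not]
          omega
        · simp [Int.natAbs_neg]
      · simp only [if_true]
        refine Prod.ext ?_ (Subtype.ext ?_)
        · simp only [decide_eq_true_eq]
          exact hmz
        · simp
  rw [Nat.card_congr e, Nat.card_prod, Nat.card_eq_fintype_card (α := Bool),
    Fintype.card_bool, Nat.card_eq_finsetCard]
  rfl

end Aux

open Finset ArithmeticFunction in
/-- The natural density of the square-free integers is
`∏_p (1 - 1/p²) = 1/ζ(2) = 6/π²`. -/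
theorem squarefree_density :
    Tendsto (fun X : ℝ =>
        (Nat.card {n : ℤ // |(n : ℝ)| ≤ X ∧ Squarefree n} : ℝ) / (2 * X))
      atTop (nhds (∏' p : Nat.Primes, (1 - 1 / (p : ℝ) ^ 2))) ∧
    (∏' p : Nat.Primes, (1 - 1 / (p : ℝ) ^ 2)) = 6 / π ^ 2 := by
  have hprod : ∏' p : Nat.Primes, (1 - 1 / (p : ℝ) ^ 2) = Aval := hasProd_one_sub.tprod_eq
  constructor
  · rw [hprod]
    have h1 : Tendsto (fun X : ℝ => (Qsf ⌊X⌋₊ : ℝ) / (⌊X⌋₊ : ℝ)) atTop (nhds Aval) :=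
      tendsto_Qsf_div.comp tendsto_nat_floor_atTop
    have h2 := tendsto_nat_floor_div_atTop (R := ℝ)
    have h3 := h1.mul h2
    rw [mul_one] at h3
    refine Tendsto.congr' ?_ h3
    filter_upwards [eventually_ge_atTop (1 : ℝ)] with X hX
    have hfl : (1 : ℕ) ≤ ⌊X⌋₊ := Nat.le_floor (by simpa using hX)
    have hfl0 : ((⌊X⌋₊ : ℕ) : ℝ) ≠ 0 := by
      have : (0 : ℕ) < ⌊X⌋₊ := hfl
      positivity
    have hX0 : X ≠ 0 := by linarith
    rw [card_eq hX]
    push_cast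
    field_simp
  · rw [hprod, Aval_eq]
end

section
/- Let p be a prime and a ∈ Z_p^5 with v(a1) ≥ 1, v(a2) ≥ 2, v(a3) ≥ 3, v(a4) ≥ 4, v(a6) ≥ 5. Then Δ(a) ≡ −432 a6^2 (mod p^{11}); in particular if p ≥ 5 and v(a6) = 5 then v(Δ) = 10 (the type II* case). -/
/-- Let `p` be a prime and `a ∈ ℤ_p⁵` with `v(a₁) ≥ 1`, `v(a₂) ≥ 2`, `v(a₃) ≥ 3`,
`v(a₄) ≥ 4`, `v(a₆) ≥ 5`. Then `Δ ≡ −432 a₆² (mod p¹¹)`; in particular if `p ≥ 5` and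
`v(a₆) = 5` then `v(Δ) = 10` (the type II* case). -/
theorem discriminant_congruence_type_IIstar (p : ℕ) [Fact p.Prime]
    (a₁ a₂ a₃ a₄ a₆ : ℤ_[p])
    (h₁ : (p : ℤ_[p]) ∣ a₁) (h₂ : (p : ℤ_[p]) ^ 2 ∣ a₂) (h₃ : (p : ℤ_[p]) ^ 3 ∣ a₃)
    (h₄ : (p : ℤ_[p]) ^ 4 ∣ a₄) (h₆ : (p : ℤ_[p]) ^ 5 ∣ a₆) :
    (p : ℤ_[p]) ^ 11 ∣ (WeierstrassCurve.mk a₁ a₂ a₃ a₄ a₆).Δ - (-432 * a₆ ^ 2) ∧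
    (5 ≤ p → ¬ (p : ℤ_[p]) ^ 6 ∣ a₆ →
      ((p : ℤ_[p]) ^ 10 ∣ (WeierstrassCurve.mk a₁ a₂ a₃ a₄ a₆).Δ ∧
        ¬ (p : ℤ_[p]) ^ 11 ∣ (WeierstrassCurve.mk a₁ a₂ a₃ a₄ a₆).Δ)) := by
  obtain ⟨c₁, rfl⟩ := h₁
  obtain ⟨c₂, rfl⟩ := h₂
  obtain ⟨c₃, rfl⟩ := h₃
  obtain ⟨c₄, rfl⟩ := h₄
  obtain ⟨c₆, rfl⟩ := h₆
  set P : ℤ_[p] := (p : ℤ_[p]) with hP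
  set D : ℤ_[p] := (WeierstrassCurve.mk (P * c₁) (P ^ 2 * c₂) (P ^ 3 * c₃) (P ^ 4 * c₄)
      (P ^ 5 * c₆)).Δ with hD
  have key : D - (-432 * (P ^ 5 * c₆) ^ 2) = P ^ 11 *
      (-216*c₃^2*c₆ + 288*c₂*c₄*c₆ - 64*c₂^3*c₆ + 144*c₁*c₂*c₃*c₆ + 72*c₁^2*c₄*c₆
        - 48*c₁^2*c₂^2*c₆ + 36*c₁^3*c₃*c₆ - 12*c₁^4*c₂*c₆ - c₁^6*c₆ - 64*P*c₄^3
        - 27*P*c₃^4 + 72*P*c₂*c₃^2*c₄ + 16*P*c₂^2*c₄^2 - 16*P*c₂^3*c₃^2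
        - 96*P*c₁*c₃*c₄^2 + 36*P*c₁*c₂*c₃^3 + 16*P*c₁*c₂^2*c₃*c₄
        - 30*P*c₁^2*c₃^2*c₄ + 8*P*c₁^2*c₂*c₄^2 - 8*P*c₁^2*c₂^2*c₃^2 + P*c₁^3*c₃^3
        + 8*P*c₁^3*c₂*c₃*c₄ + P*c₁^4*c₄^2 - P*c₁^4*c₂*c₃^2 + P*c₁^5*c₃*c₄) := by
    rw [hD]
    simp only [WeierstrassCurve.Δ, WeierstrassCurve.b₂, WeierstrassCurve.b₄,
      WeierstrassCurve.b₆, WeierstrassCurve.b₈]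
    ring
  obtain ⟨K, hK⟩ : ∃ K, D - (-432 * (P ^ 5 * c₆) ^ 2) = P ^ 11 * K := ⟨_, key⟩
  refine ⟨⟨K, hK⟩, fun hp5 hnd => ?_⟩
  have hpp : Prime P := PadicInt.prime_p
  have hP0 : P ≠ 0 := hpp.ne_zero
  have hDeq : D = P ^ 11 * K + P ^ 10 * (-432 * c₆ ^ 2) := by
    have := eq_add_of_sub_eq hK
    rw [this]; ring
  constructor
  · rw [hDeq]
    exact dvd_add ⟨P * K, by ring⟩ ⟨-432 * c₆ ^ 2, by ring⟩
  · intro hd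
    have h11 : P ^ 11 ∣ P ^ 10 * (-432 * c₆ ^ 2) := by
      have e : P ^ 10 * (-432 * c₆ ^ 2) = D - P ^ 11 * K := by rw [hDeq]; ring
      rw [e]
      exact dvd_sub hd (dvd_mul_right _ _)
    rw [pow_succ] at h11
    have hpd : P ∣ -432 * c₆ ^ 2 :=
      (mul_dvd_mul_iff_left (pow_ne_zero 10 hP0)).mp h11
    rcases hpp.dvd_mul.mp hpd with h | h
    · have h' : P ∣ ((-432 : ℤ) : ℤ_[p]) := by exact_mod_cast h
      have hn : ‖((-432 : ℤ) : ℤ_[p])‖ < 1 := (PadicInt.norm_lt_one_iff_dvd _).mpr h'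
      have hz : (p : ℤ) ∣ -432 := (PadicInt.norm_int_lt_one_iff_dvd _).mp hn
      have hnat : p ∣ 432 := by
        have := (Int.dvd_neg).mpr hz
        norm_num at this
        exact_mod_cast this
      have hp' : Nat.Prime p := Fact.out
      have h1627 : p ∣ 16 * 27 := by norm_num; exact hnat
      rcases (Nat.Prime.dvd_mul hp').mp h1627 with h16 | h27
      · have hd2 : p ∣ 2 := hp'.dvd_of_dvd_pow (n := 4) (by norm_num; exact h16)
        have := Nat.le_of_dvd (by norm_num) hd2; omega
      · have hd3 : p ∣ 3 := hp'.dvd_of_dvd_pow (n := 3) (by norm_num; exact h27)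
        have := Nat.le_of_dvd (by norm_num) hd3; omega
    · obtain ⟨d, rfl⟩ := hpp.dvd_of_dvd_pow h
      exact hnd ⟨d, by ring⟩
end
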